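/- arXiv:1508.07854 — 2 statements merged into one kernel-verified Lean document; each statement's English description precedes it below -/
import Mathlib

section
/- Assume there exists K > 0 with ρ₀ ≤ K ρ_{p,0}, ρ₁ ≤ K ρ_{p,1} and ρ ≤ K ρ_{p,2} in Q_T. If ((y,p),(λ,μ)) ∈ U × X is the solution of the first-order mixed formulation, then there exists C > 0 such that ‖ρ_{p,0}⁻¹y‖_{L²(Q_T)} + ‖ρ_{p,1}⁻¹p‖_{L²(Q_T)} ≤ C ‖(y,p)‖_U ≤ C ‖ρ₀⁻¹y_obs‖_{L²(q_T)}. -/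
/-!
The second equation of the mixed formulation, tested with `(I, J)` themselves, forces
`J(y,p) = 0` and `I(y,p) = 0`: the solution solves the state equation. Hence `‖(y,p)‖_U` reduces
to the observation term `‖ρ₀⁻¹y‖_{L²(q_T)}`, and the first equation tested with `(y,p)` gives
`‖ρ₀⁻¹y‖² = ⟪ρ₀⁻¹y, ρ₀⁻¹y_obs⟫`, so `‖(y,p)‖_U ≤ ‖ρ₀⁻¹y_obs‖`. By the comparison of weights the
Carleman norm of `(y,p)` is then at most `K` times its `U`-norm, and the weighted estimate on
`U_p` bounds `ρ_{p,0}⁻¹y` and `ρ_{p,1}⁻¹p`.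
-/

open scoped RealInnerProductSpace

section InnerProduct

variable {E F : Type*} [NormedAddCommGroup E] [InnerProductSpace ℝ E]
  [NormedAddCommGroup F] [InnerProductSpace ℝ F]

theorem eq_zero_and_eq_zero_of_forall_inner_add_inner_eq_zero {a : E} {b : F}
    (h : ∀ (x : E) (y : F), ⟪a, x⟫ + ⟪b, y⟫ = 0) : a = 0 ∧ b = 0 := by
  constructor
  · simpa using h a 0
  · simpa using h 0 b

theorem norm_le_of_inner_self_eq_inner {x g : E} (h : ⟪x, x⟫ = ⟪x, g⟫) : ‖x‖ ≤ ‖g‖ := by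
  have hsq : ‖x‖ ^ 2 ≤ ‖x‖ * ‖g‖ := by
    rw [← real_inner_self_eq_norm_sq, h]
    exact real_inner_le_norm x g
  nlinarith [norm_nonneg x, norm_nonneg g]

end InnerProduct

theorem add_le_sqrt_two_mul_mul_of_sq_add_sq_le {a b c s : ℝ} (hs : 0 ≤ s)
    (h : a ^ 2 + b ^ 2 ≤ c * s ^ 2) : a + b ≤ √(2 * c) * s :=
  calc a + b ≤ √(2 * c * s ^ 2) :=
        Real.le_sqrt_of_sq_le (by linarith [add_sq a b, two_mul_le_add_sq a b])
    _ = √(2 * c) * s := by rw [Real.sqrt_mul' _ (sq_nonneg s), Real.sqrt_sq hs]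

/- `U` stands for the completed space of pairs `(y,p)`; `obsU u = ρ₀⁻¹y|_{q_T}`,
`Jm u = ρ₁⁻¹J(y,p)`, `Im u = ρ⁻¹I(y,p)`, `g = ρ₀⁻¹y_obs`, and `obsp`, `Jp`, `Ip` are the same
maps with the Carleman weights `ρ_{p,0}`, `ρ_{p,1}`, `ρ_{p,2}`; `W0 u = ρ_{p,0}⁻¹y` on `Q_T` and
`W2 u = ρ_{p,1}⁻¹p`. -/
theorem firstOrder_carleman_stability_general
    {U HQ VQ Hq : Type*}
    [NormedAddCommGroup U] [InnerProductSpace ℝ U]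
    [NormedAddCommGroup HQ] [InnerProductSpace ℝ HQ]
    [NormedAddCommGroup VQ] [InnerProductSpace ℝ VQ]
    [NormedAddCommGroup Hq] [InnerProductSpace ℝ Hq]
    (obsU obsp : U →L[ℝ] Hq) (Jm Jp : U →L[ℝ] VQ) (Im Ip : U →L[ℝ] HQ)
    (W0 : U →L[ℝ] HQ) (W2 : U →L[ℝ] VQ)
    (η₁ η₂ : ℝ)
    (hnormU : ∀ u : U,
      ‖u‖ ^ 2 = ‖obsU u‖ ^ 2 + η₁ * ‖Jm u‖ ^ 2 + η₂ * ‖Im u‖ ^ 2)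
    -- the comparison hypothesis (3.13): ρ₀ ≤ Kρ_{p,0}, ρ₁ ≤ Kρ_{p,1}, ρ ≤ Kρ_{p,2}
    (K : ℝ) (hK : 0 < K)
    (hcmp₀ : ∀ u : U, ‖obsp u‖ ≤ K * ‖obsU u‖)
    (hcmp₁ : ∀ u : U, ‖Jp u‖ ≤ K * ‖Jm u‖)
    (hcmp₂ : ∀ u : U, ‖Ip u‖ ≤ K * ‖Im u‖)
    -- the weighted estimate (3.12) on the Carleman-weighted completion U_p
    (C₀ : ℝ) (hC₀ : 0 < C₀)
    (hEst : ∀ u : U, ‖W0 u‖ ^ 2 + ‖W2 u‖ ^ 2 ≤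
      C₀ * (‖obsp u‖ ^ 2 + η₁ * ‖Jp u‖ ^ 2 + η₂ * ‖Ip u‖ ^ 2))
    (g : Hq) (u : U) (lam : HQ) (mu : VQ)
    -- ((y,p),(λ,μ)) solves the first-order mixed formulation (3.5)
    (hsol : (∀ ub : U,
        ⟪obsU u, obsU ub⟫ + (⟪Jm ub, mu⟫ + ⟪Im ub, lam⟫) = ⟪obsU ub, g⟫) ∧
      (∀ (lamb : HQ) (mub : VQ), ⟪Jm u, mub⟫ + ⟪Im u, lamb⟫ = 0)) :
    ∃ C > 0, ‖W0 u‖ + ‖W2 u‖ ≤ C * ‖u‖ ∧ C * ‖u‖ ≤ C * ‖g‖ := by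
  obtain ⟨hJ, hI⟩ :=
    eq_zero_and_eq_zero_of_forall_inner_add_inner_eq_zero fun m l => hsol.2 l m
  have hu : ‖u‖ = ‖obsU u‖ :=
    (sq_eq_sq₀ (norm_nonneg _) (norm_nonneg _)).1 (by simpa [hJ, hI] using hnormU u)
  have hug : ‖u‖ ≤ ‖g‖ :=
    hu ▸ norm_le_of_inner_self_eq_inner (by simpa [hJ, hI] using hsol.1 u)
  have hJp : Jp u = 0 := norm_le_zero_iff.1 (by simpa [hJ] using hcmp₁ u)
  have hIp : Ip u = 0 := norm_le_zero_iff.1 (by simpa [hI] using hcmp₂ u)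
  have hobsp : ‖obsp u‖ ^ 2 ≤ K ^ 2 * ‖u‖ ^ 2 := by
    rw [← mul_pow, hu]
    exact pow_le_pow_left₀ (norm_nonneg _) (hcmp₀ u) 2
  have hweighted : ‖W0 u‖ ^ 2 + ‖W2 u‖ ^ 2 ≤ C₀ * K ^ 2 * ‖u‖ ^ 2 :=
    calc ‖W0 u‖ ^ 2 + ‖W2 u‖ ^ 2 ≤ C₀ * ‖obsp u‖ ^ 2 := by simpa [hJp, hIp] using hEst u
      _ ≤ C₀ * (K ^ 2 * ‖u‖ ^ 2) := by gcongr
      _ = C₀ * K ^ 2 * ‖u‖ ^ 2 := by ring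
  refine ⟨√(2 * (C₀ * K ^ 2)), Real.sqrt_pos.2 (by positivity), ?_,
    mul_le_mul_of_nonneg_left hug (Real.sqrt_nonneg _)⟩
  exact add_le_sqrt_two_mul_mul_of_sq_add_sq_le (norm_nonneg u) hweighted

theorem firstOrder_carleman_stability
    {U HQ VQ Hq : Type*}
    [NormedAddCommGroup U] [InnerProductSpace ℝ U] [CompleteSpace U]
    [NormedAddCommGroup HQ] [InnerProductSpace ℝ HQ] [CompleteSpace HQ]
    [NormedAddCommGroup VQ] [InnerProductSpace ℝ VQ] [CompleteSpace VQ]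
    [NormedAddCommGroup Hq] [InnerProductSpace ℝ Hq] [CompleteSpace Hq]
    (obsU obsp : U →L[ℝ] Hq) (Jm Jp : U →L[ℝ] VQ) (Im Ip : U →L[ℝ] HQ)
    (W0 : U →L[ℝ] HQ) (W2 : U →L[ℝ] VQ)
    (η₁ η₂ : ℝ) (hη₁ : 0 < η₁) (hη₂ : 0 < η₂)
    (hnormU : ∀ u : U,
      ‖u‖ ^ 2 = ‖obsU u‖ ^ 2 + η₁ * ‖Jm u‖ ^ 2 + η₂ * ‖Im u‖ ^ 2)
    -- the comparison hypothesis (3.13): ρ₀ ≤ Kρ_{p,0}, ρ₁ ≤ Kρ_{p,1}, ρ ≤ Kρ_{p,2}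
    (K : ℝ) (hK : 0 < K)
    (hcmp₀ : ∀ u : U, ‖obsp u‖ ≤ K * ‖obsU u‖)
    (hcmp₁ : ∀ u : U, ‖Jp u‖ ≤ K * ‖Jm u‖)
    (hcmp₂ : ∀ u : U, ‖Ip u‖ ≤ K * ‖Im u‖)
    -- the weighted estimate (3.12) on the Carleman-weighted completion U_p
    (C₀ : ℝ) (hC₀ : 0 < C₀)
    (hEst : ∀ u : U, ‖W0 u‖ ^ 2 + ‖W2 u‖ ^ 2 ≤
      C₀ * (‖obsp u‖ ^ 2 + η₁ * ‖Jp u‖ ^ 2 + η₂ * ‖Ip u‖ ^ 2))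
    (g : Hq) (u : U) (lam : HQ) (mu : VQ)
    -- ((y,p),(λ,μ)) solves the first-order mixed formulation (3.5)
    (hsol : (∀ ub : U,
        ⟪obsU u, obsU ub⟫ + (⟪Jm ub, mu⟫ + ⟪Im ub, lam⟫) = ⟪obsU ub, g⟫) ∧
      (∀ (lamb : HQ) (mub : VQ), ⟪Jm u, mub⟫ + ⟪Im u, lamb⟫ = 0)) :
    ∃ C > 0, ‖W0 u‖ + ‖W2 u‖ ≤ C * ‖u‖ ∧ C * ‖u‖ ≤ C * ‖g‖ :=
  firstOrder_carleman_stability_general obsU obsp Jm Jp Im Ip W0 W2 η₁ η₂ hnormU K hK hcmp₀ hcmp₁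
    hcmp₂ C₀ hC₀ hEst g u lam mu hsol
end

section
/- For any r = (r₁,r₂) with r₁, r₂ > 0, let (y₀,p₀) ∈ U be the unique solution of a_r((y₀,p₀),(ȳ,p̄)) = l(ȳ,p̄) for all (ȳ,p̄) ∈ U, and define J_r⋆⋆(λ,μ) := ½∫∫_{Q_T} T_r(λ,μ)·(λ,μ) dxdt − b((y₀,p₀),(λ,μ)). Then sup over (λ,μ) ∈ X of inf over (y,p) ∈ U of 𝓛_r((y,p),(λ,μ)) equals −inf over (λ,μ) ∈ X of J_r⋆⋆(λ,μ) plus 𝓛_r((y₀,p₀),(0,0)), where 𝓛_r((y,p),(λ,μ)) := ½a_r((y,p),(y,p)) + b((y,p),(λ,μ)) − l(y,p). -/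
/-!
The augmented form `a_r` is symmetric and positive semidefinite. For `q = (λ, μ)` let
`v q ∈ U` solve `a_r (v q) · = b(·, q)`, so that `T_r q` is read off `v q`, and put
`w q := v q - u₀`. Since `a_r u₀ · = l`, the Lagrangian is `𝓛_r(u, q) = ½ a_r(u, u) + a_r(w q, u)`;
completing the square, its infimum over `u` is `-½ a_r(w q, w q)`, attained at `u = -w q`.
The same identities give `J_r⋆⋆ q = ½ a_r(w q, w q) + 𝓛_r(u₀, 0)`, so the inner infimum is
`-J_r⋆⋆ q + 𝓛_r(u₀, 0)`, and `J_r⋆⋆` is bounded below by `𝓛_r(u₀, 0)`.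
-/

open Set
open scoped RealInnerProductSpace

theorem Real.iSup_neg_add {ι : Type*} [Nonempty ι] {f : ι → ℝ} (hf : BddBelow (range f))
    (c : ℝ) : ⨆ i, (-f i + c) = -(⨅ i, f i) + c := by
  have hneg : ⨆ i, -f i = -⨅ i, f i := by
    simpa using (Real.iInf_mul_of_nonpos (r := -1) (by norm_num) f).symm
  rw [← hneg, ciSup_add hf.range_neg]

namespace LinearMap.BilinForm

variable {E : Type*} [AddCommGroup E] [Module ℝ E] {B : LinearMap.BilinForm ℝ E}

theorem half_apply_self_add_apply_eq (hB : B.IsSymm) (u w : E) :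
    1 / 2 * B u u + B w u = 1 / 2 * B (u + w) (u + w) - 1 / 2 * B w w := by
  simp only [map_add, LinearMap.add_apply, hB.eq u w]
  ring

theorem iInf_half_apply_self_add_apply (hB : B.IsSymm) (hB₀ : ∀ u, 0 ≤ B u u) (w : E) :
    ⨅ u, (1 / 2 * B u u + B w u) = -(1 / 2 * B w w) := by
  refine IsLeast.csInf_eq ⟨⟨-w, ?_⟩, ?_⟩
  · simp only [map_neg, LinearMap.neg_apply, neg_neg]
    ring
  · rintro _ ⟨u, rfl⟩
    dsimp only
    rw [half_apply_self_add_apply_eq hB]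
    linarith [hB₀ (u + w)]

theorem iSup_iInf_eq_neg_iInf_add {ι : Type*} [Nonempty ι] (hB : B.IsSymm)
    (hB₀ : ∀ u, 0 ≤ B u u) {L : ι → E → ℝ} {J : ι → ℝ} (w : ι → E) (k : ℝ)
    (hL : ∀ q u, L q u = 1 / 2 * B u u + B (w q) u)
    (hJ : ∀ q, J q = 1 / 2 * B (w q) (w q) + k) :
    ⨆ q, ⨅ u, L q u = -(⨅ q, J q) + k := by
  have hinner : ∀ q, ⨅ u, L q u = -J q + k := by
    intro q
    simp only [hL, iInf_half_apply_self_add_apply hB hB₀, hJ]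
    ring
  have hJ_ge : ∀ q, k ≤ J q := fun q => by
    rw [hJ]
    linarith [hB₀ (w q)]
  simp only [hinner]
  exact Real.iSup_neg_add ⟨k, by rintro _ ⟨q, rfl⟩; exact hJ_ge q⟩ k

end LinearMap.BilinForm

section

variable {U HQ VQ Hq : Type*}
    [NormedAddCommGroup U] [InnerProductSpace ℝ U]
    [NormedAddCommGroup HQ] [InnerProductSpace ℝ HQ]
    [NormedAddCommGroup VQ] [InnerProductSpace ℝ VQ]
    [NormedAddCommGroup Hq] [InnerProductSpace ℝ Hq]

variable (obsU : U →L[ℝ] Hq) (Jm : U →L[ℝ] VQ) (Im : U →L[ℝ] HQ) (r₁ r₂ : ℝ)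

/-- The augmented form `a_r`. -/
noncomputable def augmentedForm : LinearMap.BilinForm ℝ U :=
  (innerₗ Hq).compl₁₂ (obsU : U →ₗ[ℝ] Hq) obsU + r₁ • (innerₗ VQ).compl₁₂ (Jm : U →ₗ[ℝ] VQ) Jm
    + r₂ • (innerₗ HQ).compl₁₂ (Im : U →ₗ[ℝ] HQ) Im

@[simp]
theorem augmentedForm_apply (u v : U) :
    augmentedForm obsU Jm Im r₁ r₂ u v =
      ⟪obsU u, obsU v⟫ + r₁ * ⟪Jm u, Jm v⟫ + r₂ * ⟪Im u, Im v⟫ := rfl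

theorem augmentedForm_isSymm : (augmentedForm obsU Jm Im r₁ r₂).IsSymm :=
  ⟨fun u v => by simp only [augmentedForm_apply, real_inner_comm]⟩

theorem augmentedForm_apply_self_nonneg {r₁ r₂ : ℝ} (hr₁ : 0 ≤ r₁) (hr₂ : 0 ≤ r₂) (u : U) :
    0 ≤ augmentedForm obsU Jm Im r₁ r₂ u u :=
  add_nonneg (add_nonneg real_inner_self_nonneg (mul_nonneg hr₁ real_inner_self_nonneg))
    (mul_nonneg hr₂ real_inner_self_nonneg)

end

theorem firstOrder_dual_formulation_eq_general
    {U HQ VQ Hq : Type*}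
    [NormedAddCommGroup U] [InnerProductSpace ℝ U]
    [NormedAddCommGroup HQ] [InnerProductSpace ℝ HQ]
    [NormedAddCommGroup VQ] [InnerProductSpace ℝ VQ]
    [NormedAddCommGroup Hq] [InnerProductSpace ℝ Hq]
    (obsU : U →L[ℝ] Hq) (Jm : U →L[ℝ] VQ) (Im : U →L[ℝ] HQ)
    (g : Hq) (r₁ r₂ : ℝ) (hr₁ : 0 < r₁) (hr₂ : 0 < r₂)
    (T : HQ × VQ → HQ × VQ)
    (hT : ∀ (lam : HQ) (mu : VQ), ∃ u : U,
      (∀ ub : U,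
        ⟪obsU u, obsU ub⟫ + r₁ * ⟪Jm u, Jm ub⟫ + r₂ * ⟪Im u, Im ub⟫ =
          ⟪Jm ub, mu⟫ + ⟪Im ub, lam⟫) ∧
      T (lam, mu) = (Im u, Jm u))
    (u₀ : U)
    (hu₀ : ∀ ub : U,
      ⟪obsU u₀, obsU ub⟫ + r₁ * ⟪Jm u₀, Jm ub⟫ + r₂ * ⟪Im u₀, Im ub⟫ =
        ⟪obsU ub, g⟫) :
    (⨆ q : HQ × VQ, ⨅ u : U,
        ((1 / 2) * (⟪obsU u, obsU u⟫ + r₁ * ⟪Jm u, Jm u⟫ +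
            r₂ * ⟪Im u, Im u⟫) +
          (⟪Jm u, q.2⟫ + ⟪Im u, q.1⟫) - ⟪obsU u, g⟫)) =
      -(⨅ q : HQ × VQ,
          ((1 / 2) * (⟪(T q).1, q.1⟫ + ⟪(T q).2, q.2⟫) -
            (⟪Jm u₀, q.2⟫ + ⟪Im u₀, q.1⟫))) +
        ((1 / 2) * (⟪obsU u₀, obsU u₀⟫ + r₁ * ⟪Jm u₀, Jm u₀⟫ +
            r₂ * ⟪Im u₀, Im u₀⟫) - ⟪obsU u₀, g⟫) := by
  set B := augmentedForm obsU Jm Im r₁ r₂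
  have hB : B.IsSymm := augmentedForm_isSymm obsU Jm Im r₁ r₂
  choose v hv hTv using fun q : HQ × VQ => hT q.1 q.2
  replace hv : ∀ q u, B (v q) u = ⟪Jm u, q.2⟫ + ⟪Im u, q.1⟫ := hv
  replace hu₀ : ∀ u, B u₀ u = ⟪obsU u, g⟫ := hu₀
  refine LinearMap.BilinForm.iSup_iInf_eq_neg_iInf_add hB
    (augmentedForm_apply_self_nonneg obsU Jm Im hr₁.le hr₂.le) (fun q => v q - u₀) _
    (fun q u => ?_) (fun q => ?_)
  · rw [map_sub, LinearMap.sub_apply, hv, hu₀]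
    change 1 / 2 * B u u + _ - _ = _
    ring
  · have hTq : ⟪(T q).1, q.1⟫ + ⟪(T q).2, q.2⟫ = B (v q) (v q) := by
      rw [hTv, hv]
      exact add_comm _ _
    rw [hTq, ← hv q u₀]
    change _ = _ + (1 / 2 * B u₀ u₀ - _)
    rw [← hu₀ u₀]
    simp only [map_sub, LinearMap.sub_apply, hB.eq u₀ (v q)]
    ring

theorem firstOrder_dual_formulation_eq
    {U HQ VQ Hq : Type*}
    [NormedAddCommGroup U] [InnerProductSpace ℝ U] [CompleteSpace U]
    [NormedAddCommGroup HQ] [InnerProductSpace ℝ HQ] [CompleteSpace HQ]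
    [NormedAddCommGroup VQ] [InnerProductSpace ℝ VQ] [CompleteSpace VQ]
    [NormedAddCommGroup Hq] [InnerProductSpace ℝ Hq] [CompleteSpace Hq]
    (obsU : U →L[ℝ] Hq) (Jm : U →L[ℝ] VQ) (Im : U →L[ℝ] HQ)
    (η₁ η₂ : ℝ) (hη₁ : 0 < η₁) (hη₂ : 0 < η₂)
    (hnormU : ∀ u : U,
      ‖u‖ ^ 2 = ‖obsU u‖ ^ 2 + η₁ * ‖Jm u‖ ^ 2 + η₂ * ‖Im u‖ ^ 2)
    (g : Hq) (r₁ r₂ : ℝ) (hr₁ : 0 < r₁) (hr₂ : 0 < r₂)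
    (T : HQ × VQ → HQ × VQ)
    (hT : ∀ (lam : HQ) (mu : VQ), ∃ u : U,
      (∀ ub : U,
        ⟪obsU u, obsU ub⟫ + r₁ * ⟪Jm u, Jm ub⟫ + r₂ * ⟪Im u, Im ub⟫ =
          ⟪Jm ub, mu⟫ + ⟪Im ub, lam⟫) ∧
      T (lam, mu) = (Im u, Jm u))
    (u₀ : U)
    (hu₀ : ∀ ub : U,
      ⟪obsU u₀, obsU ub⟫ + r₁ * ⟪Jm u₀, Jm ub⟫ + r₂ * ⟪Im u₀, Im ub⟫ =
        ⟪obsU ub, g⟫) :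
    (⨆ q : HQ × VQ, ⨅ u : U,
        ((1 / 2) * (⟪obsU u, obsU u⟫ + r₁ * ⟪Jm u, Jm u⟫ +
            r₂ * ⟪Im u, Im u⟫) +
          (⟪Jm u, q.2⟫ + ⟪Im u, q.1⟫) - ⟪obsU u, g⟫)) =
      -(⨅ q : HQ × VQ,
          ((1 / 2) * (⟪(T q).1, q.1⟫ + ⟪(T q).2, q.2⟫) -
            (⟪Jm u₀, q.2⟫ + ⟪Im u₀, q.1⟫))) +
        ((1 / 2) * (⟪obsU u₀, obsU u₀⟫ + r₁ * ⟪Jm u₀, Jm u₀⟫ +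
            r₂ * ⟪Im u₀, Im u₀⟫) - ⟪obsU u₀, g⟫) :=
  firstOrder_dual_formulation_eq_general obsU Jm Im g r₁ r₂ hr₁ hr₂ T hT u₀ hu₀
end
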